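/- Let 0 < d < 1/4 and suppose ψ_l ≤ C l^{d-1} for l ≥ 1, ψ_0 ≤ C. Then for N ≥ 2 and h ∈ {-1, 1}, the sum ∑ over l, m, n, o ≥ 0 with |l-m| ≤ N-1, |n-o| ≤ N-1 and l - m + n - o = hN of ψ_l ψ_m ψ_n ψ_o is bounded by C' N^{4d-1} for a constant C' depending only on C and d. -/

import Mathlib

/-!
Writing `k = n - o`, the constraints force `l - m = hN - k` with `0 < |k| < N`, so the sum
factorises as `∑_k c(hN - k) c(k)` with `c(j) = ∑_m ψ_{m+|j|} ψ_m`. Splitting `c(j)` at `m = |j|`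
gives `c(j) ≤ A |j|^{2d-1}`: the near part through the partial sums `∑_{m ≤ j} ψ_m = O(j^d)`, the
far part through `∑_{m > j} m^{2d-2} = O(j^{2d-1})`. In `∑_{0<k<N} (N-k)^{2d-1} k^{2d-1}` the larger
of `k` and `N - k` is at least `N/2`, which leaves `O(N^{2d-1} ∑_{k<N} k^{2d-1}) = O(N^{4d-1})`.
The power sums are bounded by telescoping with the tangent-line (Bernoulli) inequalities for
`x ↦ x ^ a`.
-/

open Real Finset

theorem mul_rpow_sub_one_le_rpow_sub_rpow {a x : ℝ} (ha0 : 0 ≤ a) (ha1 : a ≤ 1) (hx : 1 ≤ x) :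
    a * x ^ (a - 1) ≤ x ^ a - (x - 1) ^ a := by
  have hx0 : 0 < x := by linarith
  have hinv : x⁻¹ ≤ 1 := inv_le_one_of_one_le₀ hx
  have hbern := rpow_one_add_le_one_add_mul_self (s := -x⁻¹) (by linarith) ha0 ha1
  have hfactor : (x - 1) ^ a = x ^ a * (1 + -x⁻¹) ^ a := by
    rw [← mul_rpow hx0.le (by linarith)]
    congr 1
    field_simp
    ring
  rw [hfactor, rpow_sub_one hx0.ne', div_eq_mul_inv]
  linear_combination (x ^ a) * hbern

theorem one_sub_mul_le_rpow_one_sub_of_nonpos {t c : ℝ} (ht0 : 0 ≤ t) (ht1 : t < 1) (hc : c ≤ 0) :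
    1 - c * t ≤ (1 - t) ^ c := by
  have hpos : 0 < 1 - t := by linarith
  rcases le_total (-1) c with hc1 | hc1
  · have hbern := rpow_one_add_le_one_add_mul_self (s := -t) (by linarith) (p := -c)
      (by linarith) (by linarith)
    have hy : 0 < (1 - t) ^ (-c) := rpow_pos_of_pos hpos _
    rw [← sub_eq_add_neg] at hbern
    rw [← neg_neg c, rpow_neg hpos.le, ← one_div, le_div_iff₀ hy]
    nlinarith [mul_nonneg ht0 (neg_nonneg.2 hc)]
  · have hbern := one_add_mul_self_le_rpow_one_add (s := t / (1 - t))
      (by linarith [div_nonneg ht0 hpos.le])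
      (p := -c) (by linarith)
    have hbase : 1 + t / (1 - t) = (1 - t)⁻¹ := by field_simp; ring
    rw [hbase, inv_rpow hpos.le, ← rpow_neg hpos.le, neg_neg] at hbern
    have : t ≤ t / (1 - t) := le_div_self ht0 hpos (by linarith)
    nlinarith

theorem neg_mul_rpow_sub_one_le_rpow_sub_rpow {c x : ℝ} (hc : c ≤ 0) (hx : 1 < x) :
    -c * x ^ (c - 1) ≤ (x - 1) ^ c - x ^ c := by
  have hx0 : 0 < x := by linarith
  have hbern :=
    one_sub_mul_le_rpow_one_sub_of_nonpos (inv_nonneg.2 hx0.le) (inv_lt_one_of_one_lt₀ hx) hc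
  have hfactor : (x - 1) ^ c = x ^ c * (1 - x⁻¹) ^ c := by
    rw [← mul_rpow hx0.le (by linarith [inv_lt_one_of_one_lt₀ hx])]
    congr 1
    field_simp
  rw [hfactor, rpow_sub_one hx0.ne', div_eq_mul_inv]
  linear_combination (x ^ c) * hbern

theorem sum_Icc_rpow_sub_one_le {a : ℝ} (ha0 : 0 < a) (ha1 : a ≤ 1) (n : ℕ) :
    ∑ k ∈ Icc 1 n, (k : ℝ) ^ (a - 1) ≤ (n : ℝ) ^ a / a := by
  induction n with
  | zero => simp [zero_rpow ha0.ne']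
  | succ n ih =>
    have hstep := mul_rpow_sub_one_le_rpow_sub_rpow ha0.le ha1 (x := (n : ℝ) + 1)
      (by linarith [n.cast_nonneg (α := ℝ)])
    rw [add_sub_cancel_right] at hstep
    rw [sum_Icc_succ_top (by omega), le_div_iff₀ ha0]
    rw [le_div_iff₀ ha0] at ih
    push_cast
    linarith

theorem sum_Ioc_rpow_sub_one_le {c : ℝ} (hc : c < 0) {j n : ℕ} (hj : 1 ≤ j) (hjn : j ≤ n) :
    ∑ m ∈ Ioc j n, (m : ℝ) ^ (c - 1) ≤ ((j : ℝ) ^ c - (n : ℝ) ^ c) / -c := by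
  induction n, hjn using Nat.le_induction with
  | base => simp
  | succ n hjn ih =>
    have hn : (1 : ℝ) < n + 1 := by
      have : (1 : ℝ) ≤ n := by exact_mod_cast hj.trans hjn
      linarith
    have hstep := neg_mul_rpow_sub_one_le_rpow_sub_rpow hc.le hn
    rw [add_sub_cancel_right] at hstep
    rw [sum_Ioc_succ_top hjn, le_div_iff₀ (neg_pos.2 hc)]
    rw [le_div_iff₀ (neg_pos.2 hc)] at ih
    push_cast
    linarith

theorem sum_rpow_sub_one_le_of_forall_lt {c : ℝ} (hc : c < 0) {j : ℕ} (hj : 1 ≤ j) (T : Finset ℕ)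
    (hT : ∀ m ∈ T, j < m) : ∑ m ∈ T, (m : ℝ) ^ (c - 1) ≤ (j : ℝ) ^ c / -c := by
  set n := max j (T.sup id)
  have hsub : T ⊆ Ioc j n := fun m hm =>
    mem_Ioc.2 ⟨hT m hm, (le_sup (f := id) hm).trans (le_max_right _ _)⟩
  calc ∑ m ∈ T, (m : ℝ) ^ (c - 1) ≤ ∑ m ∈ Ioc j n, (m : ℝ) ^ (c - 1) :=
        sum_le_sum_of_subset_of_nonneg hsub fun m _ _ => by positivity
    _ ≤ ((j : ℝ) ^ c - (n : ℝ) ^ c) / -c := sum_Ioc_rpow_sub_one_le hc hj (le_max_left _ _)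
    _ ≤ (j : ℝ) ^ c / -c := by
        gcongr
        · linarith
        · exact sub_le_self _ (by positivity)

section Autocovariance

variable {psi : ℕ → ℝ} {C d : ℝ}

theorem sum_le_of_le_rpow (hd0 : 0 < d) (hd1 : d ≤ 1) (hpos : ∀ l, 0 ≤ psi l) (h0 : psi 0 ≤ C)
    (hbound : ∀ l : ℕ, 1 ≤ l → psi l ≤ C * (l : ℝ) ^ (d - 1)) {j : ℕ} (hj : 1 ≤ j)
    (T : Finset ℕ) (hT : ∀ m ∈ T, m ≤ j) :
    ∑ m ∈ T, psi m ≤ C * (1 + 1 / d) * (j : ℝ) ^ d := by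
  have hC : 0 ≤ C := (hpos 0).trans h0
  have hsub : T ⊆ insert 0 (Icc 1 j) := fun m hm => by
    simp only [mem_insert, mem_Icc]
    have := hT m hm
    omega
  have hjd : 1 ≤ (j : ℝ) ^ d := one_le_rpow (by exact_mod_cast hj) hd0.le
  have hpowers := sum_Icc_rpow_sub_one_le hd0 hd1 j
  calc ∑ m ∈ T, psi m ≤ ∑ m ∈ insert 0 (Icc 1 j), psi m :=
        sum_le_sum_of_subset_of_nonneg hsub fun m _ _ => hpos m
    _ = psi 0 + ∑ m ∈ Icc 1 j, psi m := sum_insert (by simp)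
    _ ≤ C + ∑ m ∈ Icc 1 j, C * (m : ℝ) ^ (d - 1) :=
        add_le_add h0 (sum_le_sum fun m hm => hbound m (mem_Icc.1 hm).1)
    _ ≤ C + C * ((j : ℝ) ^ d / d) := by
        rw [← mul_sum]
        gcongr
    _ ≤ C * (1 + 1 / d) * (j : ℝ) ^ d := by
        rw [div_eq_mul_one_div]
        nlinarith [mul_nonneg hC (one_div_pos.2 hd0).le]

theorem sum_shift_mul_le (hd0 : 0 < d) (hd : d < 1 / 2) (hpos : ∀ l, 0 ≤ psi l) (h0 : psi 0 ≤ C)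
    (hbound : ∀ l : ℕ, 1 ≤ l → psi l ≤ C * (l : ℝ) ^ (d - 1)) {j : ℕ} (hj : 1 ≤ j)
    (T : Finset ℕ) :
    ∑ m ∈ T, psi (m + j) * psi m ≤
      C ^ 2 * (1 + 1 / d + 1 / (1 - 2 * d)) * (j : ℝ) ^ (2 * d - 1) := by
  have hC : 0 ≤ C := (hpos 0).trans h0
  have hj0 : (0 : ℝ) < j := by exact_mod_cast hj
  have hshift : ∀ m : ℕ, ∀ i ≤ m + j, 1 ≤ i → psi (m + j) ≤ C * (i : ℝ) ^ (d - 1) :=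
    fun m i hi hi1 =>
    (hbound _ (by omega)).trans <| mul_le_mul_of_nonneg_left
      (rpow_le_rpow_of_nonpos (by exact_mod_cast hi1) (by exact_mod_cast hi) (by linarith)) hC
  have hnear : ∑ m ∈ T with m ≤ j, psi (m + j) * psi m
      ≤ C ^ 2 * (1 + 1 / d) * (j : ℝ) ^ (2 * d - 1) := calc
    _ ≤ ∑ m ∈ T with m ≤ j, C * (j : ℝ) ^ (d - 1) * psi m :=
        sum_le_sum fun m _ => mul_le_mul_of_nonneg_right (hshift m j (by omega) hj) (hpos m)
    _ = C * (j : ℝ) ^ (d - 1) * ∑ m ∈ T with m ≤ j, psi m := (mul_sum ..).symm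
    _ ≤ C * (j : ℝ) ^ (d - 1) * (C * (1 + 1 / d) * (j : ℝ) ^ d) := by
        gcongr
        exact sum_le_of_le_rpow hd0 (by linarith) hpos h0 hbound hj _
          fun m hm => (mem_filter.1 hm).2
    _ = C ^ 2 * (1 + 1 / d) * (j : ℝ) ^ (2 * d - 1) := by
        rw [show 2 * d - 1 = (d - 1) + d by ring, rpow_add hj0]
        ring
  have hfar : ∑ m ∈ T with ¬m ≤ j, psi (m + j) * psi m
      ≤ C ^ 2 * (1 / (1 - 2 * d)) * (j : ℝ) ^ (2 * d - 1) := calc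
    _ ≤ ∑ m ∈ T with ¬m ≤ j, C ^ 2 * (m : ℝ) ^ (2 * d - 1 - 1) := by
        refine sum_le_sum fun m hm => ?_
        have hm : 1 ≤ m := by have := (mem_filter.1 hm).2; omega
        have hm0 : (0 : ℝ) < m := by exact_mod_cast hm
        calc psi (m + j) * psi m ≤ (C * (m : ℝ) ^ (d - 1)) * (C * (m : ℝ) ^ (d - 1)) :=
              mul_le_mul (hshift m m (by omega) hm) (hbound m hm) (hpos m) (by positivity)
          _ = C ^ 2 * (m : ℝ) ^ (2 * d - 1 - 1) := by
              rw [show 2 * d - 1 - 1 = (d - 1) + (d - 1) by ring, rpow_add hm0]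
              ring
    _ = C ^ 2 * ∑ m ∈ T with ¬m ≤ j, (m : ℝ) ^ (2 * d - 1 - 1) := (mul_sum ..).symm
    _ ≤ C ^ 2 * ((j : ℝ) ^ (2 * d - 1) / -(2 * d - 1)) := by
        gcongr
        exact sum_rpow_sub_one_le_of_forall_lt (by linarith) hj _ fun m hm => by
          have := (mem_filter.1 hm).2
          omega
    _ = C ^ 2 * (1 / (1 - 2 * d)) * (j : ℝ) ^ (2 * d - 1) := by
        rw [neg_sub]
        ring
  rw [← sum_filter_add_sum_filter_not T (· ≤ j)]
  linarith

end Autocovariance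

theorem rpow_le_two_mul_rpow_of_le_two_mul {a x y : ℝ} (ha0 : 0 ≤ a) (ha1 : a ≤ 1) (hx : 0 < x)
    (hxy : x ≤ 2 * y) : y ^ (a - 1) ≤ 2 * x ^ (a - 1) := by
  have htwo : (2 : ℝ)⁻¹ ≤ 2 ^ (a - 1) := by
    simpa [rpow_neg_one] using
      rpow_le_rpow_of_exponent_le (x := 2) one_le_two (by linarith : -1 ≤ a - 1)
  calc y ^ (a - 1) ≤ (x / 2) ^ (a - 1) :=
        rpow_le_rpow_of_nonpos (by positivity) (by linarith) (by linarith)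
    _ = x ^ (a - 1) / 2 ^ (a - 1) := div_rpow hx.le zero_le_two _
    _ ≤ x ^ (a - 1) / 2⁻¹ := by gcongr
    _ = 2 * x ^ (a - 1) := by field_simp

theorem sum_Ico_rpow_mul_rpow_le {a : ℝ} (ha0 : 0 < a) (ha1 : a ≤ 1) (N : ℕ) :
    ∑ k ∈ Ico 1 N, ((N - k : ℕ) : ℝ) ^ (a - 1) * (k : ℝ) ^ (a - 1) ≤
      4 / a * (N : ℝ) ^ (2 * a - 1) := by
  obtain rfl | hN := N.eq_zero_or_pos
  · simp only [Ico_eq_empty_of_le zero_le_one, sum_empty]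
    positivity
  have hN0 : (0 : ℝ) < N := by exact_mod_cast hN
  set u : ℕ → ℝ := fun k => (k : ℝ) ^ (a - 1)
  set b := 2 * (N : ℝ) ^ (a - 1)
  show ∑ k ∈ Ico 1 N, u (N - k) * u k ≤ _
  have hpair : ∀ k ∈ Ico 1 N, u (N - k) * u k ≤ b * (u (N - k) + u k) := by
    intro k hk
    have hk := mem_Ico.1 hk
    have hx : 0 ≤ u (N - k) := by positivity
    have hy : 0 ≤ u k := by positivity
    rcases le_total N (2 * k) with hbig | hbig
    · have : u k ≤ b :=
        rpow_le_two_mul_rpow_of_le_two_mul ha0.le ha1 hN0 (by exact_mod_cast hbig)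
      nlinarith
    · have hbig' : 2 * (k : ℝ) ≤ N := by exact_mod_cast hbig
      have : u (N - k) ≤ b :=
        rpow_le_two_mul_rpow_of_le_two_mul ha0.le ha1 hN0 (by push_cast [hk.2.le]; linarith)
      nlinarith
  have hreflect : ∑ k ∈ Ico 1 N, u (N - k) = ∑ k ∈ Ico 1 N, u k := by
    rw [sum_Ico_reflect u 1 (by omega : N ≤ N + 1), Nat.add_sub_cancel_left, Nat.add_sub_cancel]
  have hpowers : ∑ k ∈ Ico 1 N, u k ≤ (N : ℝ) ^ a / a :=
    (sum_le_sum_of_subset_of_nonneg Ico_subset_Icc_self fun k _ _ => by positivity).trans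
      (sum_Icc_rpow_sub_one_le ha0 ha1 N)
  calc _ ≤ ∑ k ∈ Ico 1 N, b * (u (N - k) + u k) := sum_le_sum hpair
    _ = 2 * b * ∑ k ∈ Ico 1 N, u k := by
        rw [← mul_sum, sum_add_distrib, hreflect]
        ring
    _ ≤ 2 * b * ((N : ℝ) ^ a / a) := by gcongr
    _ = 4 / a * (N : ℝ) ^ (2 * a - 1) := by
        rw [show 2 * a - 1 = (a - 1) + a by ring, rpow_add hN0]
        ring

theorem tsum_ite_mem_mul_le (K : Finset ℕ) {f g : ℕ → ℕ → ℝ} {F G : ℕ → ℝ}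
    (hf : ∀ k m, 0 ≤ f k m) (hg : ∀ k m, 0 ≤ g k m)
    (hF : ∀ k ∈ K, ∀ T : Finset ℕ, ∑ m ∈ T, f k m ≤ F k)
    (hG : ∀ k ∈ K, ∀ T : Finset ℕ, ∑ m ∈ T, g k m ≤ G k) :
    ∑' x : ℕ × ℕ × ℕ, (if x.1 ∈ K then f x.1 x.2.1 * g x.1 x.2.2 else 0) ≤ ∑ k ∈ K, F k * G k := by
  have hF0 : ∀ k ∈ K, 0 ≤ F k := fun k hk => by simpa using hF k hk ∅
  have hG0 : ∀ k ∈ K, 0 ≤ G k := fun k hk => by simpa using hG k hk ∅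
  refine tsum_le_of_sum_le' (sum_nonneg fun k hk => mul_nonneg (hF0 k hk) (hG0 k hk)) fun s => ?_
  set S := s.image Prod.snd
  have hs : s ⊆ s.image Prod.fst ×ˢ (S.image Prod.fst ×ˢ S.image Prod.snd) :=
    subset_product.trans (product_subset_product_right subset_product)
  calc _ ≤ ∑ x ∈ s.image Prod.fst ×ˢ (S.image Prod.fst ×ˢ S.image Prod.snd),
        (if x.1 ∈ K then f x.1 x.2.1 * g x.1 x.2.2 else 0) :=
        sum_le_sum_of_subset_of_nonneg hs fun x _ _ => by
          split_ifs
          exacts [mul_nonneg (hf _ _) (hg _ _), le_rfl]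
    _ = ∑ k ∈ s.image Prod.fst ∩ K,
        (∑ m ∈ S.image Prod.fst, f k m) * ∑ o ∈ S.image Prod.snd, g k o := by
        rw [sum_product, ← sum_ite_mem]
        refine sum_congr rfl fun k _ => ?_
        split_ifs
        · rw [sum_product, sum_mul_sum]
        · simp
    _ ≤ ∑ k ∈ s.image Prod.fst ∩ K, F k * G k := by
        refine sum_le_sum fun k hk => ?_
        have hk := (mem_inter.1 hk).2
        exact mul_le_mul (hF k hk _) (hG k hk _) (sum_nonneg fun m _ => hg k m) (hF0 k hk)
    _ ≤ ∑ k ∈ K, F k * G k :=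
        sum_le_sum_of_subset_of_nonneg inter_subset_right fun k hk _ =>
          mul_nonneg (hF0 k hk) (hG0 k hk)

def fourfoldTerm (psi : ℕ → ℝ) (N : ℕ) (h : ℤ) (q : ℕ × ℕ × ℕ × ℕ) : ℝ :=
  if |(q.1 : ℤ) - q.2.1| ≤ (N : ℤ) - 1 ∧ |(q.2.2.1 : ℤ) - q.2.2.2| ≤ (N : ℤ) - 1 ∧
      (q.1 : ℤ) - q.2.1 + q.2.2.1 - q.2.2.2 = h * N then
    psi q.1 * psi q.2.1 * psi q.2.2.1 * psi q.2.2.2 else 0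

theorem fourfoldTerm_neg (psi : ℕ → ℝ) (N : ℕ) (h : ℤ) (q : ℕ × ℕ × ℕ × ℕ) :
    fourfoldTerm psi N (-h) (q.2.1, q.1, q.2.2.2, q.2.2.1) = fourfoldTerm psi N h q := by
  unfold fourfoldTerm
  rw [abs_sub_comm (q.2.1 : ℤ), abs_sub_comm (q.2.2.2 : ℤ)]
  refine if_congr (and_congr_right' (and_congr_right' ?_)) (by ring) rfl
  constructor <;> intro <;> linarith

theorem tsum_fourfoldTerm_neg (psi : ℕ → ℝ) (N : ℕ) (h : ℤ) :
    ∑' q, fourfoldTerm psi N (-h) q = ∑' q, fourfoldTerm psi N h q := by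
  let swap : Equiv.Perm (ℕ × ℕ × ℕ × ℕ) :=
    Function.Involutive.toPerm (fun q => (q.2.1, q.1, q.2.2.2, q.2.2.1)) fun _ => rfl
  rw [← swap.tsum_eq]
  exact tsum_congr (fourfoldTerm_neg psi N h)

/-- Parametrises `(l, m, n, o)` by the lag `k = n - o`, with `l - m = N - k`. -/
def lagEmbedding (N : ℕ) (x : ℕ × ℕ × ℕ) : ℕ × ℕ × ℕ × ℕ :=
  (x.2.1 + (N - x.1), x.2.1, x.2.2 + x.1, x.2.2)

theorem lagEmbedding_injective (N : ℕ) : Function.Injective (lagEmbedding N) := by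
  rintro ⟨k, m, o⟩ ⟨k', m', o'⟩ hkmo
  simp only [lagEmbedding, Prod.mk.injEq] at hkmo
  simp only [Prod.mk.injEq]
  omega

theorem support_fourfoldTerm_one_subset (psi : ℕ → ℝ) (N : ℕ) :
    Function.support (fourfoldTerm psi N 1) ⊆ Set.range (lagEmbedding N) := by
  rintro ⟨l, m, n, o⟩ hq
  simp only [Function.mem_support, fourfoldTerm, abs_le, ne_eq, ite_eq_right_iff,
    not_forall] at hq
  obtain ⟨⟨hlm, hno, hsum⟩, -⟩ := hq
  refine ⟨(n - o, m, o), ?_⟩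
  simp only [lagEmbedding, Prod.mk.injEq, and_true, true_and]
  omega

theorem fourfoldTerm_one_lagEmbedding (psi : ℕ → ℝ) (N : ℕ) (x : ℕ × ℕ × ℕ) :
    fourfoldTerm psi N 1 (lagEmbedding N x) =
      if x.1 ∈ Ico 1 N then
        psi (x.2.1 + (N - x.1)) * psi x.2.1 * (psi (x.2.2 + x.1) * psi x.2.2) else 0 := by
  unfold fourfoldTerm lagEmbedding
  refine if_congr ?_ (by ring) rfl
  simp only [abs_le, mem_Ico]
  omega

theorem tsum_fourfoldTerm_one (psi : ℕ → ℝ) (N : ℕ) :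
    ∑' q, fourfoldTerm psi N 1 q = ∑' x : ℕ × ℕ × ℕ, if x.1 ∈ Ico 1 N then
      psi (x.2.1 + (N - x.1)) * psi x.2.1 * (psi (x.2.2 + x.1) * psi x.2.2) else 0 := by
  rw [← (lagEmbedding_injective N).tsum_eq (support_fourfoldTerm_one_subset psi N)]
  exact tsum_congr (fourfoldTerm_one_lagEmbedding psi N)

theorem offresonance_fourfold_sum_bound (d C : ℝ) (hd0 : 0 < d) (hd : d < 1 / 4)
    (psi : ℕ → ℝ) (hpos : ∀ l, 0 ≤ psi l) (h0 : psi 0 ≤ C)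
    (hbound : ∀ l : ℕ, 1 ≤ l → psi l ≤ C * (l : ℝ) ^ (d - 1)) :
    ∃ C' : ℝ, 0 < C' ∧ ∀ N : ℕ, 2 ≤ N → ∀ h : ℤ, h ∈ ({-1, 1} : Set ℤ) →
      (∑' q : ℕ × ℕ × ℕ × ℕ,
          if |(q.1 : ℤ) - q.2.1| ≤ (N : ℤ) - 1 ∧ |(q.2.2.1 : ℤ) - q.2.2.2| ≤ (N : ℤ) - 1 ∧
              (q.1 : ℤ) - q.2.1 + q.2.2.1 - q.2.2.2 = h * N then
            psi q.1 * psi q.2.1 * psi q.2.2.1 * psi q.2.2.2 else 0)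
        ≤ C' * (N : ℝ) ^ (4 * d - 1) := by
  set A := C ^ 2 * (1 + 1 / d + 1 / (1 - 2 * d))
  refine ⟨A ^ 2 * (2 / d) + 1, by positivity, fun N hN h hh => ?_⟩
  have hsymm : ∑' q, fourfoldTerm psi N h q = ∑' q, fourfoldTerm psi N 1 q := by
    rcases hh with rfl | rfl
    exacts [tsum_fourfoldTerm_neg psi N 1, rfl]
  calc ∑' q, fourfoldTerm psi N h q = ∑' x : ℕ × ℕ × ℕ, if x.1 ∈ Ico 1 N then
        psi (x.2.1 + (N - x.1)) * psi x.2.1 * (psi (x.2.2 + x.1) * psi x.2.2) else 0 := by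
        rw [hsymm, tsum_fourfoldTerm_one]
    _ ≤ ∑ k ∈ Ico 1 N, A * ((N - k : ℕ) : ℝ) ^ (2 * d - 1) * (A * (k : ℝ) ^ (2 * d - 1)) :=
        tsum_ite_mem_mul_le _ (fun _ _ => mul_nonneg (hpos _) (hpos _))
          (fun _ _ => mul_nonneg (hpos _) (hpos _))
          (fun k hk => sum_shift_mul_le hd0 (by linarith) hpos h0 hbound
            (by have := mem_Ico.1 hk; omega))
          (fun k hk => sum_shift_mul_le hd0 (by linarith) hpos h0 hbound (mem_Ico.1 hk).1)
    _ = A ^ 2 * ∑ k ∈ Ico 1 N, ((N - k : ℕ) : ℝ) ^ (2 * d - 1) * (k : ℝ) ^ (2 * d - 1) := by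
        rw [mul_sum]
        exact sum_congr rfl fun _ _ => by ring
    _ ≤ A ^ 2 * (4 / (2 * d) * (N : ℝ) ^ (2 * (2 * d) - 1)) := by
        gcongr
        exact sum_Ico_rpow_mul_rpow_le (by linarith) (by linarith) N
    _ ≤ (A ^ 2 * (2 / d) + 1) * (N : ℝ) ^ (4 * d - 1) := by
        rw [show 2 * (2 * d) - 1 = 4 * d - 1 by ring, show 4 / (2 * d) = 2 / d by field_simp; ring]
        nlinarith [rpow_nonneg (Nat.cast_nonneg N) (4 * d - 1)]
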